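/- arXiv:1911.08781 — 8 statements merged into one kernel-verified Lean document; each statement's English description precedes it below -/
import Mathlib

section
/- Let C be a category, let (p0 : A0 → B0, s0 : B0 → A0) and (p1 : A1 → B1, s1 : B1 → A1) be split epimorphisms (p0 ∘ s0 = id, p1 ∘ s1 = id), and let f : A0 → A1 and g : B0 → B1 satisfy p1 ∘ f = g ∘ p0 and f ∘ s0 = s1 ∘ g. If f is an epimorphism, then the commutative square with sides f, p0, p1, g (i.e. g ∘ p0 = p1 ∘ f) is a pushout square. -/
/-!
Any cocone `(k, h)` under `(p₀, f)` factors through `(g, p₁)` via `s₁ ≫ h`: the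
`g`-leg holds because `s₀` splits `p₀`, and the `p₁`-leg holds after precomposing with
`f`, which is epi. Uniqueness holds because `p₁` is split by `s₁`.
-/

open CategoryTheory

section

variable {C : Type*} [Category C]

theorem IsPushout.of_section {W X Y Z : C} {fst : W ⟶ X} {snd : W ⟶ Y} {inl : X ⟶ Z}
    {inr : Y ⟶ Z} (sq : CommSq fst snd inl inr) (s : Z ⟶ Y) (hs : s ≫ inr = 𝟙 Z)
    (hinl : ∀ {T : C} (k : X ⟶ T) (h : Y ⟶ T), fst ≫ k = snd ≫ h → inl ≫ s ≫ h = k)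
    (hinr : ∀ {T : C} (k : X ⟶ T) (h : Y ⟶ T), fst ≫ k = snd ≫ h → inr ≫ s ≫ h = h) :
    IsPushout fst snd inl inr :=
  ⟨sq, ⟨Limits.PushoutCocone.IsColimit.mk _ (fun c => s ≫ c.inr)
    (fun c => hinl c.inl c.inr c.condition) (fun c => hinr c.inl c.inr c.condition)
    (fun c m _ hm => by rw [← hm, reassoc_of% hs])⟩⟩

variable {A₀ B₀ A₁ B₁ : C} {p₀ : A₀ ⟶ B₀} {s₀ : B₀ ⟶ A₀} {p₁ : A₁ ⟶ B₁} {s₁ : B₁ ⟶ A₁}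
  {f : A₀ ⟶ A₁} {g : B₀ ⟶ B₁} {T : C} {k : B₀ ⟶ T} {h : A₁ ⟶ T}

theorem comp_splitting_comp_eq_of_comm (hs₀ : s₀ ≫ p₀ = 𝟙 B₀) (hsf : s₀ ≫ f = g ≫ s₁)
    (w : p₀ ≫ k = f ≫ h) : g ≫ s₁ ≫ h = k :=
  calc g ≫ s₁ ≫ h = s₀ ≫ f ≫ h := by rw [reassoc_of% hsf]
    _ = s₀ ≫ p₀ ≫ k := by rw [w]
    _ = k := by rw [reassoc_of% hs₀]

theorem proj_comp_splitting_comp_eq_of_comm [Epi f] (hs₀ : s₀ ≫ p₀ = 𝟙 B₀)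
    (hpf : f ≫ p₁ = p₀ ≫ g) (hsf : s₀ ≫ f = g ≫ s₁) (w : p₀ ≫ k = f ≫ h) :
    p₁ ≫ s₁ ≫ h = h := by
  rw [← cancel_epi f]
  calc f ≫ p₁ ≫ s₁ ≫ h = p₀ ≫ g ≫ s₁ ≫ h := by rw [reassoc_of% hpf]
    _ = p₀ ≫ k := by rw [comp_splitting_comp_eq_of_comm hs₀ hsf w]
    _ = f ≫ h := w

end

/-- A morphism of points `(f, g) : (p0, s0) → (p1, s1)` whose first component `f` is an
epimorphism yields a pushout square `g ∘ p0 = p1 ∘ f`. -/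
theorem point_morphism_epi_is_pushout {C : Type*} [Category C] {A₀ B₀ A₁ B₁ : C}
    (p₀ : A₀ ⟶ B₀) (s₀ : B₀ ⟶ A₀) (p₁ : A₁ ⟶ B₁) (s₁ : B₁ ⟶ A₁)
    (hs₀ : s₀ ≫ p₀ = 𝟙 B₀) (hs₁ : s₁ ≫ p₁ = 𝟙 B₁)
    (f : A₀ ⟶ A₁) (g : B₀ ⟶ B₁)
    (hpf : f ≫ p₁ = p₀ ≫ g) (hsf : s₀ ≫ f = g ≫ s₁)
    [Epi f] :
    IsPushout p₀ f g p₁ :=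
  IsPushout.of_section ⟨hpf.symm⟩ s₁ hs₁
    (fun _ _ w => comp_splitting_comp_eq_of_comm hs₀ hsf w)
    (fun _ _ w => proj_comp_splitting_comp_eq_of_comm hs₀ hpf hsf w)
end

section
/- Let f : A → B and g : A → C be surjective group homomorphisms, let D together with g' : B → D and f' : C → D be the pushout of f and g in the category of groups, and let h := g' ∘ f = f' ∘ g : A → D be the diagonal. Then the kernel of h equals the join of the kernels of f and g, i.e. ker h = ker f ⊔ ker g (the subgroup generated by ker f and ker g, which equals the product ker f · ker g since both are normal). -/
/-! Modulo `N := ker f ⊔ ker g`, the quotient map `A → A ⧸ N` factors through both surjections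
`f` and `g`, giving a cocone over the span `B ← A → C`. The universal property of `D` then factors
this cocone through `D`, so every element killed by the diagonal `A → D` is killed in `A ⧸ N`. -/

universe u

namespace MonoidHom

variable {A B Q : Type*} [Group A] [Group B] [Group Q]

theorem exists_comp_eq_of_surjective_of_ker_le {f : A →* B} (hf : Function.Surjective f)
    (φ : A →* Q) (hker : f.ker ≤ φ.ker) : ∃ u : B →* Q, u.comp f = φ :=
  ⟨f.liftOfRightInverse _ (Function.rightInverse_surjInv hf) ⟨φ, hker⟩,
    f.liftOfRightInverse_comp _ _ _⟩

end MonoidHom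

section Pushout

variable {A B C D : Type u} [Group A] [Group B] [Group C] [Group D]
  {f : A →* B} {g : A →* C} {g' : B →* D} {f' : C →* D}

theorem ker_sup_ker_le_ker_diagonal (hcomm : g'.comp f = f'.comp g) :
    f.ker ⊔ g.ker ≤ (g'.comp f).ker := by
  refine sup_le (fun a ha => ?_) (fun a ha => ?_)
  · rw [MonoidHom.mem_ker, MonoidHom.comp_apply, MonoidHom.mem_ker.mp ha, map_one]
  · rw [hcomm, MonoidHom.mem_ker, MonoidHom.comp_apply, MonoidHom.mem_ker.mp ha, map_one]

theorem ker_diagonal_le_ker_sup_ker (hf : Function.Surjective f) (hg : Function.Surjective g)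
    (hfactor : ∀ (E : Type u) [Group E] (u : B →* E) (v : C →* E),
      u.comp f = v.comp g → ∃ w : D →* E, w.comp g' = u) :
    (g'.comp f).ker ≤ f.ker ⊔ g.ker := by
  set N := f.ker ⊔ g.ker
  have hkerπ : (QuotientGroup.mk' N).ker = N := QuotientGroup.ker_mk' N
  obtain ⟨u, hu⟩ := MonoidHom.exists_comp_eq_of_surjective_of_ker_le hf (QuotientGroup.mk' N)
    (hkerπ.symm ▸ le_sup_left)
  obtain ⟨v, hv⟩ := MonoidHom.exists_comp_eq_of_surjective_of_ker_le hg (QuotientGroup.mk' N)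
    (hkerπ.symm ▸ le_sup_right)
  obtain ⟨w, hw⟩ := hfactor (A ⧸ N) u v (hu.trans hv.symm)
  calc (g'.comp f).ker ≤ w.ker.comap (g'.comp f) := (g'.comp f).ker_le_comap w.ker
    _ = (w.comp (g'.comp f)).ker := MonoidHom.comap_ker _ _
    _ = N := by rw [← MonoidHom.comp_assoc, hw, hu, hkerπ]

end Pushout

/-- For surjective group homomorphisms `f : A → B` and `g : A → C` with pushout `D`
(structure maps `g' : B → D`, `f' : C → D`), the kernel of the diagonal
`h = g' ∘ f = f' ∘ g` is the join of the kernels of `f` and `g`. -/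
theorem ker_diagonal_of_pushout_eq_sup
    {A B C D : Type u} [Group A] [Group B] [Group C] [Group D]
    (f : A →* B) (g : A →* C)
    (hf : Function.Surjective f) (hg : Function.Surjective g)
    (g' : B →* D) (f' : C →* D)
    (hcomm : g'.comp f = f'.comp g)
    (huniv : ∀ (E : Type u) [Group E] (u : B →* E) (v : C →* E),
      u.comp f = v.comp g → ∃! w : D →* E, w.comp g' = u ∧ w.comp f' = v) :
    (g'.comp f).ker = f.ker ⊔ g.ker :=
  le_antisymm
    (ker_diagonal_le_ker_sup_ker hf hg fun E _ u v huv =>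
      (huniv E u v huv).exists.imp fun _ hw => hw.1)
    (ker_sup_ker_le_ker_diagonal hcomm)
end

section
/- Let L be a group and let μ : M → L and ν : N → L be crossed modules of groups over L, with induced mutual actions ᵐn := ^(μ(m))n and ⁿm := ^(ν(n))m. Then there exist unique group homomorphisms π_M : M ⊗ N → M and π_N : M ⊗ N → N such that π_M(m ⊗ n) = m·(ⁿm)⁻¹ and π_N(m ⊗ n) = (ᵐn)·n⁻¹ for all m ∈ M and n ∈ N. -/
/-- A crossed module of groups: a homomorphism `μ : M → L` together with an action of `L`
on `M` by automorphisms, such that `μ` is equivariant (with `L` acting on itself by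
conjugation) and the Peiffer identity holds. -/
def IsCrossedModule {M L : Type*} [Group M] [Group L]
    (μ : M →* L) (σ : L →* MulAut M) : Prop :=
  (∀ l m, μ (σ l m) = l * μ m * l⁻¹) ∧ ∀ m m', σ (μ m) m' = m * m' * m⁻¹

/-- The defining relations of the Brown–Loday non-abelian tensor product of two groups `M`
and `N` acting on each other via `actM : M → N → N` and `actN : N → M → M` (and on
themselves by conjugation): `(m * m') ⊗ n = (ᵐm' ⊗ ᵐn) * (m ⊗ n)` and
`m ⊗ (n * n') = (m ⊗ n) * (ⁿm ⊗ ⁿn')`. -/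
def tensorRels (M N : Type*) [Group M] [Group N]
    (actM : M → N → N) (actN : N → M → M) : Set (FreeGroup (M × N)) :=
  (Set.range fun p : M × M × N =>
    FreeGroup.of (p.1 * p.2.1, p.2.2) *
      (FreeGroup.of (p.1 * p.2.1 * p.1⁻¹, actM p.1 p.2.2) * FreeGroup.of (p.1, p.2.2))⁻¹) ∪
  (Set.range fun p : M × N × N =>
    FreeGroup.of (p.1, p.2.1 * p.2.2) *
      (FreeGroup.of (p.1, p.2.1) *
        FreeGroup.of (actN p.2.1 p.1, p.2.1 * p.2.2 * p.2.1⁻¹))⁻¹)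

/-- The Brown–Loday non-abelian tensor product `M ⊗ N` of groups `M` and `N` acting on
each other, presented by generators `m ⊗ n` and the tensor relations. -/
abbrev NATensor (M N : Type*) [Group M] [Group N]
    (actM : M → N → N) (actN : N → M → M) : Type _ :=
  PresentedGroup (tensorRels M N actM actN)

/-- The generator `m ⊗ n` of the non-abelian tensor product. -/
abbrev tensorOf {M N : Type*} [Group M] [Group N]
    {actM : M → N → N} {actN : N → M → M} (m : M) (n : N) :
    NATensor M N actM actN :=
  PresentedGroup.of (m, n)

/-- Given crossed modules `μ : M → L` and `ν : N → L`, there are unique homomorphisms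
`π_M : M ⊗ N → M` and `π_N : M ⊗ N → N` with `π_M (m ⊗ n) = m * (ⁿm)⁻¹` and
`π_N (m ⊗ n) = (ᵐn) * n⁻¹`. -/
theorem tensor_projections_exist_unique
    {M N L : Type*} [Group M] [Group N] [Group L]
    (μ : M →* L) (ν : N →* L) (σM : L →* MulAut M) (σN : L →* MulAut N)
    (hμ : IsCrossedModule μ σM) (hν : IsCrossedModule ν σN) :
    (∃! πM : NATensor M N (fun m n => σN (μ m) n) (fun n m => σM (ν n) m) →* M,
      ∀ (m : M) (n : N), πM (tensorOf m n) = m * (σM (ν n) m)⁻¹) ∧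
    (∃! πN : NATensor M N (fun m n => σN (μ m) n) (fun n m => σM (ν n) m) →* N,
      ∀ (m : M) (n : N), πN (tensorOf m n) = σN (μ m) n * n⁻¹) := by
  obtain ⟨hμ1, hμ2⟩ := hμ
  obtain ⟨hν1, hν2⟩ := hν
  have conjM : ∀ (l l' : L) (x : M), σM (l * l' * l⁻¹) (σM l x) = σM l (σM l' x) := by
    intro l l' x
    simp [map_mul, map_inv, MulAut.mul_apply, MulAut.inv_def]
  have conjN : ∀ (l l' : L) (x : N), σN (l * l' * l⁻¹) (σN l x) = σN l (σN l' x) := by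
    intro l l' x
    simp [map_mul, map_inv, MulAut.mul_apply, MulAut.inv_def]
  constructor
  · -- πM
    set f : M × N → M := fun p => p.1 * (σM (ν p.2) p.1)⁻¹ with hf
    have h : ∀ r ∈ tensorRels M N (fun m n => σN (μ m) n) (fun n m => σM (ν n) m),
        FreeGroup.lift f r = 1 := by
      rintro r (⟨⟨m, m', n⟩, rfl⟩ | ⟨⟨m, n, n'⟩, rfl⟩) <;>
        rw [map_mul, map_inv, map_mul, FreeGroup.lift_apply_of, FreeGroup.lift_apply_of,
          FreeGroup.lift_apply_of, mul_inv_eq_one] <;> simp only [hf]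
      · have key : σM (ν (σN (μ m) n)) (m * m' * m⁻¹) = m * σM (ν n) m' * m⁻¹ := by
          rw [hν1, ← hμ2 m m', conjM, hμ2]
        rw [key, map_mul (σM (ν n))]
        group
      · have key : σM (ν (n * n' * n⁻¹)) (σM (ν n) m) = σM (ν n) (σM (ν n') m) := by
          rw [map_mul ν, map_mul ν, map_inv ν, conjM]
        rw [key, map_mul ν, map_mul σM, MulAut.mul_apply]
        group
    refine ⟨PresentedGroup.toGroup h, fun m n => PresentedGroup.toGroup.of h, ?_⟩
    intro g hg
    ext ⟨m, n⟩
    rw [hg, PresentedGroup.toGroup.of]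
  · -- πN
    set f : M × N → N := fun p => σN (μ p.1) p.2 * p.2⁻¹ with hf
    have h : ∀ r ∈ tensorRels M N (fun m n => σN (μ m) n) (fun n m => σM (ν n) m),
        FreeGroup.lift f r = 1 := by
      rintro r (⟨⟨m, m', n⟩, rfl⟩ | ⟨⟨m, n, n'⟩, rfl⟩) <;>
        rw [map_mul, map_inv, map_mul, FreeGroup.lift_apply_of, FreeGroup.lift_apply_of,
          FreeGroup.lift_apply_of, mul_inv_eq_one] <;> simp only [hf]
      · have key : σN (μ (m * m' * m⁻¹)) (σN (μ m) n) = σN (μ m) (σN (μ m') n) := by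
          rw [map_mul μ, map_mul μ, map_inv μ, conjN]
        rw [key, map_mul μ, map_mul σN, MulAut.mul_apply]
        group
      · have key : σN (μ (σM (ν n) m)) (n * n' * n⁻¹) = n * σN (μ m) n' * n⁻¹ := by
          rw [hμ1, ← hν2 n n', conjN, hν2]
        rw [key, map_mul (σN (μ m))]
        group
    refine ⟨PresentedGroup.toGroup h, fun m n => PresentedGroup.toGroup.of h, ?_⟩
    intro g hg
    ext ⟨m, n⟩
    rw [hg, PresentedGroup.toGroup.of]
end

section
/- Let L be a group and let μ : M → L and ν : N → L be crossed modules of groups over L, with induced mutual actions ᵐn := ^(μ(m))n and ⁿm := ^(ν(n))m. Then there is a unique action of L on the non-abelian tensor product M ⊗ N by automorphisms such that ˡ(m ⊗ n) = (ˡm) ⊗ (ˡn) for all l ∈ L, m ∈ M, n ∈ N. -/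
/-! The assignment `m ⊗ n ↦ ˡm ⊗ ˡn` respects the defining relations of `M ⊗ N` because each
`ˡ(-)` commutes with the mutual actions: by equivariance of `μ`,
`ˡ(ᵐn) = ^(l μ(m) l⁻¹)(ˡn) = ^(μ(ˡm))(ˡn)`, and symmetrically for `ν`. Hence every `l` induces
an endomorphism of `M ⊗ N`, these compose like the elements of `L` (check on generators), and
so are automorphisms. Uniqueness holds since the `m ⊗ n` generate `M ⊗ N`. -/

namespace NATensor

variable {M N M' N' : Type*} [Group M] [Group N] [Group M'] [Group N']
  {actM : M → N → N} {actN : N → M → M} {actM' : M' → N' → N'} {actN' : N' → M' → M'}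

lemma tensorOf_mul_left (m m' : M) (n : N) :
    (tensorOf (actM := actM) (actN := actN) (m * m') n) =
      tensorOf (m * m' * m⁻¹) (actM m n) * tensorOf m n := by
  have h : PresentedGroup.mk (tensorRels M N actM actN)
      (FreeGroup.of (m * m', n) *
        (FreeGroup.of (m * m' * m⁻¹, actM m n) * FreeGroup.of (m, n))⁻¹) = 1 :=
    (QuotientGroup.eq_one_iff _).2 <|
      Subgroup.subset_normalClosure (Or.inl ⟨(m, m', n), rfl⟩)
  rwa [map_mul, map_inv, map_mul, mul_inv_eq_one] at h

lemma tensorOf_mul_right (m : M) (n n' : N) :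
    (tensorOf (actM := actM) (actN := actN) m (n * n')) =
      tensorOf m n * tensorOf (actN n m) (n * n' * n⁻¹) := by
  have h : PresentedGroup.mk (tensorRels M N actM actN)
      (FreeGroup.of (m, n * n') *
        (FreeGroup.of (m, n) * FreeGroup.of (actN n m, n * n' * n⁻¹))⁻¹) = 1 :=
    (QuotientGroup.eq_one_iff _).2 <|
      Subgroup.subset_normalClosure (Or.inr ⟨(m, n, n'), rfl⟩)
  rwa [map_mul, map_inv, map_mul, mul_inv_eq_one] at h

@[ext]
lemma hom_ext {G : Type*} [Group G] {f g : NATensor M N actM actN →* G}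
    (h : ∀ m n, f (tensorOf m n) = g (tensorOf m n)) : f = g :=
  PresentedGroup.ext fun p => h p.1 p.2

def map (f : M →* M') (g : N →* N')
    (hf : ∀ m n, g (actM m n) = actM' (f m) (g n))
    (hg : ∀ n m, f (actN n m) = actN' (g n) (f m)) :
    NATensor M N actM actN →* NATensor M' N' actM' actN' :=
  PresentedGroup.toGroup (f := fun p : M × N => tensorOf (f p.1) (g p.2)) <| by
    rintro r (⟨⟨m, m', n⟩, rfl⟩ | ⟨⟨m, n, n'⟩, rfl⟩) <;>
      simp only [map_mul, map_inv, FreeGroup.lift_apply_of, mul_inv_eq_one]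
    · rw [hf]; exact tensorOf_mul_left _ _ _
    · rw [hg]; exact tensorOf_mul_right _ _ _

@[simp]
lemma map_tensorOf (f : M →* M') (g : N →* N')
    (hf : ∀ m n, g (actM m n) = actM' (f m) (g n))
    (hg : ∀ n m, f (actN n m) = actN' (g n) (f m)) (m : M) (n : N) :
    map f g hf hg (tensorOf m n) = tensorOf (f m) (g n) :=
  PresentedGroup.toGroup.of _

def congr (e : M ≃* M') (e' : N ≃* N')
    (he : ∀ m n, e' (actM m n) = actM' (e m) (e' n))
    (he' : ∀ n m, e (actN n m) = actN' (e' n) (e m)) :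
    NATensor M N actM actN ≃* NATensor M' N' actM' actN' :=
  MonoidHom.toMulEquiv (map e.toMonoidHom e'.toMonoidHom he he')
    (map e.symm.toMonoidHom e'.symm.toMonoidHom
      (fun m n => e'.injective <| by simp [he])
      (fun n m => e.injective <| by simp [he']))
    (by ext; simp) (by ext; simp)

@[simp]
lemma congr_tensorOf (e : M ≃* M') (e' : N ≃* N')
    (he : ∀ m n, e' (actM m n) = actM' (e m) (e' n))
    (he' : ∀ n m, e (actN n m) = actN' (e' n) (e m)) (m : M) (n : N) :
    congr e e' he he' (tensorOf m n) = tensorOf (e m) (e' n) :=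
  map_tensorOf _ _ he he' m n

variable {L : Type*} [Group L]

def diagAction (σM : L →* MulAut M) (σN : L →* MulAut N)
    (hM : ∀ l m n, σN l (actM m n) = actM (σM l m) (σN l n))
    (hN : ∀ l n m, σM l (actN n m) = actN (σN l n) (σM l m)) :
    L →* MulAut (NATensor M N actM actN) where
  toFun l := congr (σM l) (σN l) (hM l) (hN l)
  map_one' := MulEquiv.toMonoidHom_injective <| by ext; simp
  map_mul' l l' := MulEquiv.toMonoidHom_injective <| by ext; simp

lemma mulAut_ext_of_tensorOf {G : Type*} [Group G] {φ ψ : G →* MulAut (NATensor M N actM actN)}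
    (h : ∀ g m n, φ g (tensorOf m n) = ψ g (tensorOf m n)) : φ = ψ :=
  MonoidHom.ext fun g => MulEquiv.toMonoidHom_injective <| hom_ext (h g)

end NATensor

lemma IsCrossedModule.mulAut_conj {M N L : Type*} [Group M] [Group N] [Group L]
    {μ : M →* L} {σM : L →* MulAut M} (hμ : IsCrossedModule μ σM) (σN : L →* MulAut N)
    (l : L) (m : M) (n : N) : σN l (σN (μ m) n) = σN (μ (σM l m)) (σN l n) := by
  simp [hμ.1, MulAut.mul_apply]

open NATensor in
/-- Given crossed modules `μ : M → L` and `ν : N → L`, there is a unique action of `L` by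
automorphisms on the non-abelian tensor product `M ⊗ N` with `ˡ(m ⊗ n) = (ˡm) ⊗ (ˡn)`. -/
theorem tensor_action_exists_unique
    {M N L : Type*} [Group M] [Group N] [Group L]
    (μ : M →* L) (ν : N →* L) (σM : L →* MulAut M) (σN : L →* MulAut N)
    (hμ : IsCrossedModule μ σM) (hν : IsCrossedModule ν σN) :
    ∃! φ : L →* MulAut (NATensor M N (fun m n => σN (μ m) n) (fun n m => σM (ν n) m)),
      ∀ (l : L) (m : M) (n : N),
        φ l (tensorOf m n) = tensorOf (σM l m) (σN l n) :=
  ⟨diagAction σM σN (hμ.mulAut_conj σN) (hν.mulAut_conj σM), fun _ _ _ => congr_tensorOf ..,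
    fun _ hφ => mulAut_ext_of_tensorOf fun l m n => by rw [hφ]; exact (congr_tensorOf ..).symm⟩
end

section
/- Let M and N be normal subgroups of a group L, regarded as crossed modules over L via the inclusion homomorphisms and the conjugation action of L, so that the induced mutual actions are by conjugation in L. Then there exists a unique group homomorphism h : M ⊗ N → L such that h(m ⊗ n) = m·n·m⁻¹·n⁻¹ for all m ∈ M, n ∈ N; the image of h is contained in M ∩ N, and it equals the commutator subgroup ⁅M, N⁆ of L. -/
/-!
When both actions are conjugation in `L`, the two tensor relations become group identities
between commutators, so `m ⊗ n ↦ ⁅m, n⁆` descends to `M ⊗ N`; it is unique because the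
`m ⊗ n` generate. The image of any such map is generated by the commutators `⁅m, n⁆`, which is
`⁅M, N⁆` by definition, and that lies in `M ⊓ N` by normality.
-/

open scoped commutatorElement

theorem PresentedGroup.range_eq_closure {α G : Type*} [Group G] {rels : Set (FreeGroup α)}
    (f : PresentedGroup rels →* G) :
    f.range = Subgroup.closure (Set.range (f ∘ PresentedGroup.of)) := by
  rw [f.range_eq_map, ← PresentedGroup.closure_range_of, MonoidHom.map_closure,
    ← Set.range_comp]

namespace NATensor

variable {L : Type*} [Group L] {M N : Subgroup L} {actM : M → N → N} {actN : N → M → M}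

theorem range_eq_commutator (h : NATensor M N actM actN →* L)
    (hh : ∀ (m : M) (n : N), h (tensorOf m n) = ⁅(m : L), (n : L)⁆) :
    h.range = ⁅M, N⁆ := by
  rw [PresentedGroup.range_eq_closure, Subgroup.commutator_def]
  congr 1
  ext x
  constructor
  · rintro ⟨⟨m, n⟩, rfl⟩
    exact ⟨m, m.2, n, n.2, (hh m n).symm⟩
  · rintro ⟨a, ha, b, hb, rfl⟩
    exact ⟨(⟨a, ha⟩, ⟨b, hb⟩), hh _ _⟩

section ConjugationActions

variable (hactM : ∀ (m : M) (n : N), (actM m n : L) = m * n * (m : L)⁻¹)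
  (hactN : ∀ (n : N) (m : M), (actN n m : L) = n * m * (n : L)⁻¹)
include hactM hactN

theorem lift_commutator_eq_one_of_mem_tensorRels :
    ∀ r ∈ tensorRels M N actM actN,
      FreeGroup.lift (fun p : M × N => ⁅(p.1 : L), (p.2 : L)⁆) r = 1 := by
  rintro r (⟨⟨m, m', n⟩, rfl⟩ | ⟨⟨m, n, n'⟩, rfl⟩) <;>
    · simp only [map_mul, map_inv, FreeGroup.lift_apply_of, commutatorElement_def,
        Subgroup.coe_mul, Subgroup.coe_inv, hactM, hactN]
      group

def commutatorHom : NATensor M N actM actN →* L :=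
  PresentedGroup.toGroup (lift_commutator_eq_one_of_mem_tensorRels hactM hactN)

theorem commutatorHom_tensorOf (m : M) (n : N) :
    commutatorHom hactM hactN (tensorOf m n) = ⁅(m : L), (n : L)⁆ :=
  PresentedGroup.toGroup.of _

end ConjugationActions

end NATensor

/-- For normal subgroups `M, N ⊴ L`, regarded as crossed modules over `L` via the
inclusions and conjugation (so that the induced mutual actions are by conjugation in
`L`), there is a unique homomorphism `h : M ⊗ N → L` with
`h(m ⊗ n) = m·n·m⁻¹·n⁻¹`; its image is contained in `M ∩ N` and equals the commutator
subgroup `⁅M, N⁆`. -/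
theorem tensor_of_normal_subgroups
    {L : Type*} [Group L] (M N : Subgroup L) (hM : M.Normal) (hN : N.Normal) :
    (∃! h : NATensor M N
        (fun (m : M) (n : N) => (⟨(m : L) * n * (m : L)⁻¹, hN.conj_mem n n.2 m⟩ : N))
        (fun (n : N) (m : M) => (⟨(n : L) * m * (n : L)⁻¹, hM.conj_mem m m.2 n⟩ : M)) →* L,
      ∀ (m : M) (n : N),
        h (tensorOf m n) = (m : L) * n * (m : L)⁻¹ * (n : L)⁻¹) ∧
    (∀ h : NATensor M N
        (fun (m : M) (n : N) => (⟨(m : L) * n * (m : L)⁻¹, hN.conj_mem n n.2 m⟩ : N))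
        (fun (n : N) (m : M) => (⟨(n : L) * m * (n : L)⁻¹, hM.conj_mem m m.2 n⟩ : M)) →* L,
      (∀ (m : M) (n : N),
          h (tensorOf m n) = (m : L) * n * (m : L)⁻¹ * (n : L)⁻¹) →
        h.range ≤ M ⊓ N ∧ h.range = ⁅M, N⁆) := by
  simp only [← commutatorElement_def]
  refine ⟨⟨NATensor.commutatorHom (fun _ _ => rfl) (fun _ _ => rfl),
    NATensor.commutatorHom_tensorOf _ _, fun h hh => ?_⟩, fun h hh => ?_⟩
  · exact PresentedGroup.ext fun p =>
      (hh p.1 p.2).trans (NATensor.commutatorHom_tensorOf _ _ _ _).symm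
  · have hrange := NATensor.range_eq_commutator h hh
    exact ⟨hrange ▸ Subgroup.commutator_le_inf M N, hrange⟩
end

section
/- Let R be a commutative ring and let M and N be R-Lie algebras acting on each other. Then the map M × N → M ⊗ N, (m, n) ↦ m ⊗ n, into the non-abelian tensor product of Lie algebras is a universal Lie pairing: it is a Lie pairing, and for every Lie pairing h : M × N → P into an R-Lie algebra P there exists a unique Lie algebra homomorphism φ : M ⊗ N → P with φ(m ⊗ n) = h(m, n) for all m ∈ M, n ∈ N. -/
universe u v

/-- An `R`-bilinear pairing `A × B → C` of modules, given as a plain two-argument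
function. -/
def IsBilinearPairing (R : Type*) {A B C : Type*} [CommRing R]
    [AddCommGroup A] [Module R A] [AddCommGroup B] [Module R B]
    [AddCommGroup C] [Module R C] (f : A → B → C) : Prop :=
  (∀ (r : R) a b, f (r • a) b = r • f a b) ∧
  (∀ (r : R) a b, f a (r • b) = r • f a b) ∧
  (∀ a a' b, f (a + a') b = f a b + f a' b) ∧
  (∀ a b b', f a (b + b') = f a b + f a b')

/-- An action of an `R`-Lie algebra `M` on an `R`-Lie algebra `N`: an `R`-bilinear map
`(m, n) ↦ m • n` with `⁅m, m'⁆ • n = m • (m' • n) − m' • (m • n)` and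
`m • ⁅n, n'⁆ = ⁅m • n, n'⁆ + ⁅n, m • n'⁆`. -/
def IsLieAction (R : Type*) {M N : Type*} [CommRing R]
    [LieRing M] [LieAlgebra R M] [LieRing N] [LieAlgebra R N]
    (act : M → N → N) : Prop :=
  IsBilinearPairing R act ∧
  (∀ m m' n, act ⁅m, m'⁆ n = act m (act m' n) - act m' (act m n)) ∧
  (∀ m n n', act m ⁅n, n'⁆ = ⁅act m n, n'⁆ + ⁅n, act m n'⁆)

/-- A Lie pairing `h : M × N → P` (Ellis) for Lie algebras `M`, `N` acting on each other
via `actM` and `actN`. -/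
def IsLiePairing (R : Type*) {M N P : Type*} [CommRing R]
    [LieRing M] [LieAlgebra R M] [LieRing N] [LieAlgebra R N]
    [LieRing P] [LieAlgebra R P]
    (actM : M → N → N) (actN : N → M → M) (h : M → N → P) : Prop :=
  IsBilinearPairing R h ∧
  (∀ m m' n, h ⁅m, m'⁆ n = h m (actM m' n) - h m' (actM m n)) ∧
  (∀ m n n', h m ⁅n, n'⁆ = h (actN n' m) n - h (actN n m) n') ∧
  (∀ m m' n n', h (actN n m) (actM m' n') = -⁅h m n, h m' n'⁆)

/-- A crossed module of `R`-Lie algebras over `L`: a Lie algebra homomorphism `μ : M → L`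
together with an action of `L` on `M` such that `μ(l • m) = ⁅l, μ m⁆` and
`μ(m) • m' = ⁅m, m'⁆`. -/
def IsLieCrossedModule {R L M : Type*} [CommRing R]
    [LieRing L] [LieAlgebra R L] [LieRing M] [LieAlgebra R M]
    (μ : M →ₗ⁅R⁆ L) (act : L → M → M) : Prop :=
  IsLieAction R act ∧
  (∀ l m, μ (act l m) = ⁅l, μ m⁆) ∧
  (∀ m m', act (μ m) m' = ⁅m, m'⁆)

/-- The defining relations of the non-abelian tensor product of Lie algebras (Ellis). -/
def lieTensorRels (R : Type u) (M N : Type v) [CommRing R]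
    [LieRing M] [LieAlgebra R M] [LieRing N] [LieAlgebra R N]
    (actM : M → N → N) (actN : N → M → M) :
    Set (FreeLieAlgebra R (M × N)) :=
  { x | (∃ (r : R) (m : M) (n : N),
          x = FreeLieAlgebra.of R (r • m, n) - r • FreeLieAlgebra.of R (m, n)) ∨
        (∃ (r : R) (m : M) (n : N),
          x = FreeLieAlgebra.of R (m, r • n) - r • FreeLieAlgebra.of R (m, n)) ∨
        (∃ (m m' : M) (n : N),
          x = FreeLieAlgebra.of R (m + m', n) - FreeLieAlgebra.of R (m, n) -
            FreeLieAlgebra.of R (m', n)) ∨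
        (∃ (m : M) (n n' : N),
          x = FreeLieAlgebra.of R (m, n + n') - FreeLieAlgebra.of R (m, n) -
            FreeLieAlgebra.of R (m, n')) ∨
        (∃ (m m' : M) (n : N),
          x = FreeLieAlgebra.of R (⁅m, m'⁆, n) - FreeLieAlgebra.of R (m, actM m' n) +
            FreeLieAlgebra.of R (m', actM m n)) ∨
        (∃ (m : M) (n n' : N),
          x = FreeLieAlgebra.of R (m, ⁅n, n'⁆) - FreeLieAlgebra.of R (actN n' m, n) +
            FreeLieAlgebra.of R (actN n m, n')) ∨
        (∃ (m m' : M) (n n' : N),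
          x = ⁅FreeLieAlgebra.of R (m, n), FreeLieAlgebra.of R (m', n')⁆ +
            FreeLieAlgebra.of R (actN n m, actM m' n')) }

/-- The non-abelian tensor product of Lie algebras (Ellis): the quotient of the free Lie
algebra on `M × N` by the Lie ideal generated by the tensor relations. -/
abbrev NALieTensor (R : Type u) (M N : Type v) [CommRing R]
    [LieRing M] [LieAlgebra R M] [LieRing N] [LieAlgebra R N]
    (actM : M → N → N) (actN : N → M → M) : Type _ :=
  FreeLieAlgebra R (M × N) ⧸
    LieSubmodule.lieSpan R (FreeLieAlgebra R (M × N)) (lieTensorRels R M N actM actN)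

/-- The generator `m ⊗ n` of the non-abelian tensor product of Lie algebras. -/
noncomputable abbrev lieTensorOf {R : Type u} {M N : Type v} [CommRing R]
    [LieRing M] [LieAlgebra R M] [LieRing N] [LieAlgebra R N]
    {actM : M → N → N} {actN : N → M → M} (m : M) (n : N) :
    NALieTensor R M N actM actN :=
  LieSubmodule.Quotient.mk (FreeLieAlgebra.of R (m, n))

/-! The defining relations of `M ⊗ N` are exactly the Lie pairing identities for the
generators, so a Lie algebra morphism out of the free Lie algebra on `M × N` kills them iff its
restriction to generators is a Lie pairing. Both halves of the theorem then follow from the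
universal properties of the free Lie algebra and of the quotient by a Lie ideal. -/

namespace LieIdeal

variable {R L P : Type*} [CommRing R] [LieRing L] [LieAlgebra R L] [LieRing P] [LieAlgebra R P]
  (I : LieIdeal R L)

noncomputable def quotientMk : L →ₗ⁅R⁆ L ⧸ I :=
  { (I : Submodule R L).mkQ with map_lie' := fun {_ _} => rfl }

noncomputable def quotientLift (f : L →ₗ⁅R⁆ P) (hf : I ≤ f.ker) : L ⧸ I →ₗ⁅R⁆ P :=
  { (I : Submodule R L).liftQ f.toLinearMap (fun x hx => LieHom.mem_ker.1 (hf hx)) with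
    map_lie' := by
      rintro ⟨x⟩ ⟨y⟩
      exact f.map_lie x y }

lemma quotient_lieHom_ext {ψ₁ ψ₂ : L ⧸ I →ₗ⁅R⁆ P}
    (h : ψ₁.comp (quotientMk I) = ψ₂.comp (quotientMk I)) : ψ₁ = ψ₂ := by
  ext ⟨x⟩
  exact LieHom.congr_fun h x

end LieIdeal

section NALieTensor

variable {R : Type u} {M N : Type v} [CommRing R]
  [LieRing M] [LieAlgebra R M] [LieRing N] [LieAlgebra R N]
  {actM : M → N → N} {actN : N → M → M} {P : Type*} [LieRing P] [LieAlgebra R P]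

open FreeLieAlgebra in
lemma forall_lieTensorRels_eq_zero_iff (f : FreeLieAlgebra R (M × N) →ₗ⁅R⁆ P) :
    (∀ x ∈ lieTensorRels R M N actM actN, f x = 0) ↔
      IsLiePairing R actM actN (fun m n => f (of R (m, n))) := by
  constructor
  · intro hf
    refine ⟨⟨fun r m n => ?_, fun r m n => ?_, fun m m' n => ?_, fun m n n' => ?_⟩,
      fun m m' n => ?_, fun m n n' => ?_, fun m m' n n' => ?_⟩
    · simpa [sub_eq_zero] using hf _ (Or.inl ⟨r, m, n, rfl⟩)
    · simpa [sub_eq_zero] using hf _ (Or.inr <| Or.inl ⟨r, m, n, rfl⟩)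
    · simpa [sub_sub, sub_eq_zero] using hf _ (Or.inr <| Or.inr <| Or.inl ⟨m, m', n, rfl⟩)
    · simpa [sub_sub, sub_eq_zero] using
        hf _ (Or.inr <| Or.inr <| Or.inr <| Or.inl ⟨m, n, n', rfl⟩)
    · simpa [sub_add, sub_eq_zero] using
        hf _ (Or.inr <| Or.inr <| Or.inr <| Or.inr <| Or.inl ⟨m, m', n, rfl⟩)
    · simpa [sub_add, sub_eq_zero] using
        hf _ (Or.inr <| Or.inr <| Or.inr <| Or.inr <| Or.inr <| Or.inl ⟨m, n, n', rfl⟩)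
    · simpa [add_eq_zero_iff_eq_neg'] using
        hf _ (Or.inr <| Or.inr <| Or.inr <| Or.inr <| Or.inr <| Or.inr ⟨m, m', n, n', rfl⟩)
  · rintro ⟨⟨h₁, h₂, h₃, h₄⟩, h₅, h₆, h₇⟩ x
      (⟨r, m, n, rfl⟩ | ⟨r, m, n, rfl⟩ | ⟨m, m', n, rfl⟩ | ⟨m, n, n', rfl⟩ |
        ⟨m, m', n, rfl⟩ | ⟨m, n, n', rfl⟩ | ⟨m, m', n, n', rfl⟩) <;>
      simp only [map_add, map_sub, map_smul, LieHom.map_lie, h₁, h₂, h₃, h₄, h₅, h₆, h₇] <;>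
      abel

lemma isLiePairing_lieTensorOf :
    IsLiePairing R actM actN (fun m n => (lieTensorOf m n : NALieTensor R M N actM actN)) :=
  (forall_lieTensorRels_eq_zero_iff (LieIdeal.quotientMk
    (LieSubmodule.lieSpan R _ (lieTensorRels R M N actM actN)))).1 fun _ hx =>
      (LieSubmodule.Quotient.mk_eq_zero _).2 (LieSubmodule.subset_lieSpan hx)

noncomputable def NALieTensor.lift (h : M → N → P) (hh : IsLiePairing R actM actN h) :
    NALieTensor R M N actM actN →ₗ⁅R⁆ P :=
  LieIdeal.quotientLift _ (FreeLieAlgebra.lift R fun p => h p.1 p.2) <|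
    LieSubmodule.lieSpan_le.2 fun x hx => LieHom.mem_ker.2 <|
      (forall_lieTensorRels_eq_zero_iff _).2 (by simpa only [FreeLieAlgebra.lift_of_apply]) x hx

@[simp]
lemma NALieTensor.lift_lieTensorOf (h : M → N → P) (hh : IsLiePairing R actM actN h)
    (m : M) (n : N) : NALieTensor.lift h hh (lieTensorOf m n) = h m n :=
  FreeLieAlgebra.lift_of_apply _ _

lemma NALieTensor.hom_ext {ψ₁ ψ₂ : NALieTensor R M N actM actN →ₗ⁅R⁆ P}
    (h : ∀ m n, ψ₁ (lieTensorOf m n) = ψ₂ (lieTensorOf m n)) : ψ₁ = ψ₂ :=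
  LieIdeal.quotient_lieHom_ext _ (FreeLieAlgebra.hom_ext fun p => h p.1 p.2)

end NALieTensor

theorem lieTensor_universal_lie_pairing_general
    (R : Type u) {M N : Type v} [CommRing R]
    [LieRing M] [LieAlgebra R M] [LieRing N] [LieAlgebra R N]
    (actM : M → N → N) (actN : N → M → M) :
    IsLiePairing R actM actN
      (fun m n => (lieTensorOf m n : NALieTensor R M N actM actN)) ∧
    ∀ (P : Type w) [LieRing P] [LieAlgebra R P] (h : M → N → P),
      IsLiePairing R actM actN h →
        ∃! φ : NALieTensor R M N actM actN →ₗ⁅R⁆ P,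
          ∀ (m : M) (n : N), φ (lieTensorOf m n) = h m n := by
  refine ⟨isLiePairing_lieTensorOf, fun P _ _ h hh => ⟨NALieTensor.lift h hh,
    NALieTensor.lift_lieTensorOf h hh, fun ψ hψ => NALieTensor.hom_ext fun m n => ?_⟩⟩
  rw [hψ, NALieTensor.lift_lieTensorOf]

/-- The map `(m, n) ↦ m ⊗ n` into the non-abelian tensor product of Lie algebras is a
universal Lie pairing: it is a Lie pairing, and every Lie pairing `h : M × N → P`
factors through it via a unique Lie algebra homomorphism. -/
theorem lieTensor_universal_lie_pairing
    (R : Type u) {M N : Type v} [CommRing R]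
    [LieRing M] [LieAlgebra R M] [LieRing N] [LieAlgebra R N]
    (actM : M → N → N) (actN : N → M → M)
    (hactM : IsLieAction R actM) (hactN : IsLieAction R actN) :
    IsLiePairing R actM actN
      (fun m n => (lieTensorOf m n : NALieTensor R M N actM actN)) ∧
    ∀ (P : Type w) [LieRing P] [LieAlgebra R P] (h : M → N → P),
      IsLiePairing R actM actN h →
        ∃! φ : NALieTensor R M N actM actN →ₗ⁅R⁆ P,
          ∀ (m : M) (n : N), φ (lieTensorOf m n) = h m n :=
  lieTensor_universal_lie_pairing_general R actM actN
end

section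
/- Let R be a commutative ring, L an R-Lie algebra, and let μ : M → L and ν : N → L be crossed modules of R-Lie algebras over L, with induced mutual actions m•n := μ(m)•n and n•m := ν(n)•m. Then there is a unique action of L on the non-abelian tensor product M ⊗ N (i.e. an R-bilinear map L × (M ⊗ N) → M ⊗ N satisfying ⁅l, l'⁆•t = l•(l'•t) − l'•(l•t) and l•⁅t, t'⁆ = ⁅l•t, t'⁆ + ⁅t, l•t'⁆) such that l•(m ⊗ n) = (l•m) ⊗ n + m ⊗ (l•n) for all l ∈ L, m ∈ M, n ∈ N. -/
universe u v

/-- "Dual number"-style Lie algebra on `A × A`. -/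
def Tang (A : Type v) : Type v := A × A

namespace Tang
variable {R : Type u} {A : Type v} [CommRing R] [LieRing A] [LieAlgebra R A]

instance : AddCommGroup (Tang A) := inferInstanceAs (AddCommGroup (A × A))
instance : Module R (Tang A) := inferInstanceAs (Module R (A × A))

instance : LieRing (Tang A) where
  bracket x y := ((⁅x.1, y.1⁆ : A), (⁅x.1, y.2⁆ + ⁅x.2, y.1⁆ : A))
  add_lie x y z := by
    show ((⁅x.1 + y.1, z.1⁆ : A), (⁅x.1 + y.1, z.2⁆ + ⁅x.2 + y.2, z.1⁆ : A)) =
      ((⁅x.1, z.1⁆ + ⁅y.1, z.1⁆ : A), (⁅x.1, z.2⁆ + ⁅x.2, z.1⁆ + (⁅y.1, z.2⁆ + ⁅y.2, z.1⁆) : A))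
    refine Prod.ext ?_ ?_ <;> simp <;> abel
  lie_add x y z := by
    show ((⁅x.1, y.1 + z.1⁆ : A), (⁅x.1, y.2 + z.2⁆ + ⁅x.2, y.1 + z.1⁆ : A)) =
      ((⁅x.1, y.1⁆ + ⁅x.1, z.1⁆ : A), (⁅x.1, y.2⁆ + ⁅x.2, y.1⁆ + (⁅x.1, z.2⁆ + ⁅x.2, z.1⁆) : A))
    refine Prod.ext ?_ ?_ <;> simp <;> abel
  lie_self x := by
    refine Prod.ext ?_ ?_
    · show (⁅x.1, x.1⁆ : A) = (0 : A)
      simp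
    · show (⁅x.1, x.2⁆ + ⁅x.2, x.1⁆ : A) = (0 : A)
      rw [← lie_skew x.2 x.1]; abel
  leibniz_lie x y z := by
    refine Prod.ext ?_ ?_
    · show (⁅x.1, ⁅y.1, z.1⁆⁆ : A) = ⁅⁅x.1, y.1⁆, z.1⁆ + ⁅y.1, ⁅x.1, z.1⁆⁆
      simp
    · show (⁅x.1, ⁅y.1, z.2⁆ + ⁅y.2, z.1⁆⁆ + ⁅x.2, ⁅y.1, z.1⁆⁆ : A) =
        ⁅⁅x.1, y.1⁆, z.2⁆ + ⁅⁅x.1, y.2⁆ + ⁅x.2, y.1⁆, z.1⁆ +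
          (⁅y.1, ⁅x.1, z.2⁆ + ⁅x.2, z.1⁆⁆ + ⁅y.2, ⁅x.1, z.1⁆⁆)
      simp only [lie_add, add_lie, lie_lie]
      abel

instance : LieAlgebra R (Tang A) where
  lie_smul t x y := by
    show ((⁅x.1, (t • y).1⁆ : A), (⁅x.1, (t • y).2⁆ + ⁅x.2, (t • y).1⁆ : A)) =
      t • ((⁅x.1, y.1⁆ : A), (⁅x.1, y.2⁆ + ⁅x.2, y.1⁆ : A))
    show ((⁅x.1, t • y.1⁆ : A), (⁅x.1, t • y.2⁆ + ⁅x.2, t • y.1⁆ : A)) = _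
    refine Prod.ext ?_ ?_ <;> simp

@[simp] lemma lie_def (x y : Tang A) :
    ⁅x, y⁆ = ((⁅x.1, y.1⁆ : A), (⁅x.1, y.2⁆ + ⁅x.2, y.1⁆ : A)) := rfl

/-- First projection as a Lie algebra homomorphism. -/
def fstHom (R : Type u) (A : Type v) [CommRing R] [LieRing A] [LieAlgebra R A] :
    Tang A →ₗ⁅R⁆ A where
  toFun x := x.1
  map_add' _ _ := rfl
  map_smul' _ _ := rfl
  map_lie' := rfl

/-- Second projection as a linear map. -/
def sndLin (R : Type u) (A : Type v) [CommRing R] [LieRing A] [LieAlgebra R A] :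
    Tang A →ₗ[R] A where
  toFun x := x.2
  map_add' _ _ := rfl
  map_smul' _ _ := rfl

@[simp] lemma fstHom_apply (x : Tang A) : fstHom R A x = x.1 := rfl
@[simp] lemma sndLin_apply (x : Tang A) : sndLin R A x = x.2 := rfl

end Tang

section Gen

variable (R : Type u) {X : Type v} [CommRing R]

lemma FreeLie.mem_lieSpan_range_of (x : FreeLieAlgebra R X) :
    x ∈ LieSubalgebra.lieSpan R (FreeLieAlgebra R X) (Set.range (FreeLieAlgebra.of R)) := by
  set K := LieSubalgebra.lieSpan R (FreeLieAlgebra R X) (Set.range (FreeLieAlgebra.of R)) with hK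
  let f : X → K := fun y => ⟨FreeLieAlgebra.of R y, LieSubalgebra.subset_lieSpan ⟨y, rfl⟩⟩
  have h : K.incl.comp (FreeLieAlgebra.lift R f) =
      (LieHom.id : FreeLieAlgebra R X →ₗ⁅R⁆ FreeLieAlgebra R X) := by
    apply FreeLieAlgebra.hom_ext
    intro y
    simp [f, FreeLieAlgebra.lift_of_apply]
  have hx : K.incl (FreeLieAlgebra.lift R f x) = x := by
    have := LieHom.congr_fun h x
    simpa using this
  rw [← hx]
  exact (FreeLieAlgebra.lift R f x).2

variable {Q : Type*} [LieRing Q] [LieAlgebra R Q]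

/-- A `π`-derivation from the free Lie algebra. -/
def IsPiDer (π : FreeLieAlgebra R X →ₗ⁅R⁆ Q) (d : FreeLieAlgebra R X →ₗ[R] Q) : Prop :=
  ∀ x y, d ⁅x, y⁆ = ⁅d x, π y⁆ + ⁅π x, d y⁆

lemma IsPiDer.ext {π : FreeLieAlgebra R X →ₗ⁅R⁆ Q} {d d' : FreeLieAlgebra R X →ₗ[R] Q}
    (hd : IsPiDer R π d) (hd' : IsPiDer R π d')
    (h : ∀ y, d (FreeLieAlgebra.of R y) = d' (FreeLieAlgebra.of R y)) : d = d' := by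
  let E : LieSubalgebra R (FreeLieAlgebra R X) :=
    { carrier := { x | d x = d' x }
      add_mem' := by
        intro a b ha hb
        simp only [Set.mem_setOf_eq, map_add] at *
        rw [ha, hb]
      zero_mem' := by simp
      smul_mem' := by
        intro r a ha
        simp only [Set.mem_setOf_eq, map_smul] at *
        rw [ha]
      lie_mem' := by
        intro a b ha hb
        simp only [Set.mem_setOf_eq] at *
        rw [hd a b, hd' a b, ha, hb] }
  have hle : LieSubalgebra.lieSpan R (FreeLieAlgebra R X)
      (Set.range (FreeLieAlgebra.of R)) ≤ E := by
    rw [LieSubalgebra.lieSpan_le]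
    rintro _ ⟨y, rfl⟩
    exact h y
  ext x
  exact hle (FreeLie.mem_lieSpan_range_of R x)

end Gen
section Construction

variable (R : Type u) {L M N : Type v} [CommRing R]
  [LieRing L] [LieAlgebra R L] [LieRing M] [LieAlgebra R M] [LieRing N] [LieAlgebra R N]
  (μ : M →ₗ⁅R⁆ L) (ν : N →ₗ⁅R⁆ L) (actLM : L → M → M) (actLN : L → N → N)

local notation "QT" => NALieTensor R M N (fun m n => actLN (μ m) n) (fun n m => actLM (ν n) m)
local notation "Rels" => lieTensorRels R M N (fun m n => actLN (μ m) n) (fun n m => actLM (ν n) m)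
local notation "II" => LieSubmodule.lieSpan R (FreeLieAlgebra R (M × N)) Rels

/-- The quotient map as a Lie algebra homomorphism. -/
noncomputable def piQ : FreeLieAlgebra R (M × N) →ₗ⁅R⁆ QT :=
  { (II).toSubmodule.mkQ with map_lie' := rfl }

@[simp] lemma piQ_of (m : M) (n : N) :
    piQ R μ ν actLM actLN (FreeLieAlgebra.of R (m, n)) = lieTensorOf m n := rfl

lemma piQ_mk (x : FreeLieAlgebra R (M × N)) :
    piQ R μ ν actLM actLN x = LieSubmodule.Quotient.mk (N := II) x := rfl

lemma piQ_eq_zero {x : FreeLieAlgebra R (M × N)} (hx : x ∈ II) :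
    piQ R μ ν actLM actLN x = 0 :=
  (LieSubmodule.Quotient.mk_eq_zero').mpr hx

lemma t_smul_left (r : R) (m : M) (n : N) :
    (lieTensorOf (r • m) n : QT) = r • lieTensorOf m n := by
  have h := piQ_eq_zero R μ ν actLM actLN
    (LieSubmodule.subset_lieSpan (Or.inl ⟨r, m, n, rfl⟩))
  rw [map_sub, map_smul, sub_eq_zero] at h
  exact h

lemma t_smul_right (r : R) (m : M) (n : N) :
    (lieTensorOf m (r • n) : QT) = r • lieTensorOf m n := by
  have h := piQ_eq_zero R μ ν actLM actLN
    (LieSubmodule.subset_lieSpan (Or.inr (Or.inl ⟨r, m, n, rfl⟩)))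
  rw [map_sub, map_smul, sub_eq_zero] at h
  exact h

lemma t_add_left (m m' : M) (n : N) :
    (lieTensorOf (m + m') n : QT) = lieTensorOf m n + lieTensorOf m' n := by
  have h := piQ_eq_zero R μ ν actLM actLN
    (LieSubmodule.subset_lieSpan (Or.inr (Or.inr (Or.inl ⟨m, m', n, rfl⟩))))
  rw [map_sub, map_sub, sub_sub, sub_eq_zero] at h
  exact h

lemma t_add_right (m : M) (n n' : N) :
    (lieTensorOf m (n + n') : QT) = lieTensorOf m n + lieTensorOf m n' := by
  have h := piQ_eq_zero R μ ν actLM actLN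
    (LieSubmodule.subset_lieSpan (Or.inr (Or.inr (Or.inr (Or.inl ⟨m, n, n', rfl⟩)))))
  rw [map_sub, map_sub, sub_sub, sub_eq_zero] at h
  exact h

lemma t_lie_left (m m' : M) (n : N) :
    (lieTensorOf ⁅m, m'⁆ n : QT) =
      lieTensorOf m (actLN (μ m') n) - lieTensorOf m' (actLN (μ m) n) := by
  have h := piQ_eq_zero R μ ν actLM actLN
    (LieSubmodule.subset_lieSpan (Or.inr (Or.inr (Or.inr (Or.inr (Or.inl ⟨m, m', n, rfl⟩))))))
  rw [map_add, map_sub] at h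
  simp only [piQ_of] at h
  apply eq_of_sub_eq_zero
  rw [← h]
  abel

lemma t_lie_right (m : M) (n n' : N) :
    (lieTensorOf m ⁅n, n'⁆ : QT) =
      lieTensorOf (actLM (ν n') m) n - lieTensorOf (actLM (ν n) m) n' := by
  have h := piQ_eq_zero R μ ν actLM actLN
    (LieSubmodule.subset_lieSpan
      (Or.inr (Or.inr (Or.inr (Or.inr (Or.inr (Or.inl ⟨m, n, n', rfl⟩)))))))
  rw [map_add, map_sub] at h
  simp only [piQ_of] at h
  apply eq_of_sub_eq_zero
  rw [← h]
  abel

lemma t_bracket (m m' : M) (n n' : N) :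
    (⁅(lieTensorOf m n : QT), lieTensorOf m' n'⁆ : QT) =
      -lieTensorOf (actLM (ν n) m) (actLN (μ m') n') := by
  have h := piQ_eq_zero R μ ν actLM actLN
    (LieSubmodule.subset_lieSpan
      (Or.inr (Or.inr (Or.inr (Or.inr (Or.inr (Or.inr ⟨m, m', n, n', rfl⟩)))))))
  rw [map_add, LieHom.map_lie] at h
  simp only [piQ_of] at h
  rw [eq_neg_iff_add_eq_zero]
  exact h

lemma t_zero_left (n : N) : (lieTensorOf 0 n : QT) = 0 := by
  simpa using t_smul_left R μ ν actLM actLN (0 : R) 0 n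

lemma t_zero_right (m : M) : (lieTensorOf m 0 : QT) = 0 := by
  simpa using t_smul_right R μ ν actLM actLN (0 : R) m 0

lemma t_neg_left (m : M) (n : N) : (lieTensorOf (-m) n : QT) = -lieTensorOf m n := by
  simpa [neg_one_smul] using t_smul_left R μ ν actLM actLN (-1 : R) m n

lemma t_neg_right (m : M) (n : N) : (lieTensorOf m (-n) : QT) = -lieTensorOf m n := by
  simpa [neg_one_smul] using t_smul_right R μ ν actLM actLN (-1 : R) m n

lemma t_sub_left (m m' : M) (n : N) :
    (lieTensorOf (m - m') n : QT) = lieTensorOf m n - lieTensorOf m' n := by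
  rw [sub_eq_add_neg, t_add_left, t_neg_left, ← sub_eq_add_neg]

lemma t_sub_right (m : M) (n n' : N) :
    (lieTensorOf m (n - n') : QT) = lieTensorOf m n - lieTensorOf m n' := by
  rw [sub_eq_add_neg, t_add_right, t_neg_right, ← sub_eq_add_neg]

/-- The lift to the "tangent" Lie algebra encoding the candidate derivation. -/
noncomputable def PhiT (l : L) : FreeLieAlgebra R (M × N) →ₗ⁅R⁆ Tang QT :=
  FreeLieAlgebra.lift R fun p =>
    ((lieTensorOf p.1 p.2 : QT),
      (lieTensorOf (actLM l p.1) p.2 + lieTensorOf p.1 (actLN l p.2) : QT))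

lemma PhiT_fst (l : L) (x : FreeLieAlgebra R (M × N)) :
    (PhiT R μ ν actLM actLN l x).1 = piQ R μ ν actLM actLN x := by
  have h : (Tang.fstHom R QT).comp (PhiT R μ ν actLM actLN l) = piQ R μ ν actLM actLN := by
    apply FreeLieAlgebra.hom_ext
    intro p
    simp only [LieHom.comp_apply, PhiT, FreeLieAlgebra.lift_of_apply, Tang.fstHom_apply]
    exact congrArg Prod.fst (FreeLieAlgebra.lift_of_apply (L := Tang QT) _ p)
  exact LieHom.congr_fun h x

/-- The candidate derivation `FreeLie → QT` attached to `l : L`. -/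
noncomputable def dl (l : L) : FreeLieAlgebra R (M × N) →ₗ[R] QT :=
  (Tang.sndLin R QT).comp (PhiT R μ ν actLM actLN l).toLinearMap

lemma dl_of (l : L) (m : M) (n : N) :
    dl R μ ν actLM actLN l (FreeLieAlgebra.of R (m, n)) =
      lieTensorOf (actLM l m) n + lieTensorOf m (actLN l n) := by
  simp [dl, PhiT, FreeLieAlgebra.lift_of_apply]
  exact congrArg Prod.snd (FreeLieAlgebra.lift_of_apply (L := Tang QT) _ (m, n))

lemma dl_pider (l : L) : IsPiDer R (piQ R μ ν actLM actLN) (dl R μ ν actLM actLN l) := by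
  intro x y
  show (PhiT R μ ν actLM actLN l ⁅x, y⁆).2 = _
  rw [LieHom.map_lie, Tang.lie_def]
  show ⁅(PhiT R μ ν actLM actLN l x).1, (PhiT R μ ν actLM actLN l y).2⁆ +
      ⁅(PhiT R μ ν actLM actLN l x).2, (PhiT R μ ν actLM actLN l y).1⁆ = _
  rw [PhiT_fst, PhiT_fst]
  exact add_comm _ _

end Construction
section Main

variable (R : Type u) {L M N : Type v} [CommRing R]
  [LieRing L] [LieAlgebra R L] [LieRing M] [LieAlgebra R M] [LieRing N] [LieAlgebra R N]
  (μ : M →ₗ⁅R⁆ L) (ν : N →ₗ⁅R⁆ L) (actLM : L → M → M) (actLN : L → N → N)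

local notation "QT" => NALieTensor R M N (fun m n => actLN (μ m) n) (fun n m => actLM (ν n) m)
local notation "Rels" => lieTensorRels R M N (fun m n => actLN (μ m) n) (fun n m => actLM (ν n) m)
local notation "II" => LieSubmodule.lieSpan R (FreeLieAlgebra R (M × N)) Rels

lemma qt_lie_add (u v w : QT) : ⁅u, v + w⁆ = ⁅u, v⁆ + ⁅u, w⁆ := lie_add u v w
lemma qt_add_lie (u v w : QT) : ⁅u + v, w⁆ = ⁅u, w⁆ + ⁅v, w⁆ := add_lie u v w
lemma qt_smul_lie (r : R) (u v : QT) : ⁅r • u, v⁆ = r • ⁅u, v⁆ := smul_lie r u v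
lemma qt_lie_smul (r : R) (u v : QT) : ⁅u, r • v⁆ = r • ⁅u, v⁆ := lie_smul r u v
lemma qt_sub_lie (u v w : QT) : ⁅u - v, w⁆ = ⁅u, w⁆ - ⁅v, w⁆ := sub_lie u v w
lemma qt_lie_sub (u v w : QT) : ⁅u, v - w⁆ = ⁅u, v⁆ - ⁅u, w⁆ := lie_sub u v w

lemma dl_rels (hμ : IsLieCrossedModule μ actLM) (hν : IsLieCrossedModule ν actLN) (l : L) :
    ∀ x ∈ Rels, dl R μ ν actLM actLN l x = 0 := by
  obtain ⟨⟨⟨hMsl, hMsr, hMal, hMar⟩, hMlie, hMder⟩, hMcomp, hMpeif⟩ := hμ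
  obtain ⟨⟨⟨hNsl, hNsr, hNal, hNar⟩, hNlie, hNder⟩, hNcomp, hNpeif⟩ := hν
  intro x hx
  rcases hx with ⟨r, m, n, rfl⟩ | ⟨r, m, n, rfl⟩ | ⟨m, m', n, rfl⟩ | ⟨m, n, n', rfl⟩ |
    ⟨m, m', n, rfl⟩ | ⟨m, n, n', rfl⟩ | ⟨m, m', n, n', rfl⟩
  · simp only [map_sub, map_smul, dl_of R μ ν actLM actLN, hMsr,
      t_smul_left R μ ν actLM actLN, t_smul_right R μ ν actLM actLN, smul_add]
    abel
  · simp only [map_sub, map_smul, dl_of R μ ν actLM actLN, hNsr,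
      t_smul_left R μ ν actLM actLN, t_smul_right R μ ν actLM actLN, smul_add]
    abel
  · simp only [map_sub, dl_of R μ ν actLM actLN, hMar,
      t_add_left R μ ν actLM actLN, t_add_right R μ ν actLM actLN]
    abel
  · simp only [map_sub, dl_of R μ ν actLM actLN, hNar,
      t_add_left R μ ν actLM actLN, t_add_right R μ ν actLM actLN]
    abel
  · simp only [map_sub, map_add, dl_of R μ ν actLM actLN, hMder,
      t_add_left R μ ν actLM actLN, t_lie_left R μ ν actLM actLN, hMcomp, hNlie,
      t_sub_right R μ ν actLM actLN]
    abel
  · simp only [map_sub, map_add, dl_of R μ ν actLM actLN, hNder,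
      t_add_right R μ ν actLM actLN, t_lie_right R μ ν actLM actLN, hNcomp, hMlie,
      t_sub_left R μ ν actLM actLN]
    abel
  · have hpd : ∀ x y, dl R μ ν actLM actLN l ⁅x, y⁆ =
        ⁅dl R μ ν actLM actLN l x, piQ R μ ν actLM actLN y⁆ +
          ⁅piQ R μ ν actLM actLN x, dl R μ ν actLM actLN l y⁆ :=
      dl_pider R μ ν actLM actLN l
    simp only [map_add, hpd, piQ_of, dl_of R μ ν actLM actLN,
      qt_add_lie R μ ν actLM actLN, qt_lie_add R μ ν actLM actLN, t_bracket R μ ν actLM actLN, hNcomp, hMcomp, hMlie, hNlie,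
      t_sub_left R μ ν actLM actLN, t_sub_right R μ ν actLM actLN]
    abel

lemma dl_vanish (hμ : IsLieCrossedModule μ actLM) (hν : IsLieCrossedModule ν actLN) (l : L)
    {x : FreeLieAlgebra R (M × N)} (hx : x ∈ II) : dl R μ ν actLM actLN l x = 0 := by
  let J : LieSubmodule R (FreeLieAlgebra R (M × N)) (FreeLieAlgebra R (M × N)) :=
    { carrier := { v | piQ R μ ν actLM actLN v = 0 ∧ dl R μ ν actLM actLN l v = 0 }
      add_mem' := by
        rintro a b ⟨ha1, ha2⟩ ⟨hb1, hb2⟩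
        exact ⟨by rw [map_add, ha1, hb1, add_zero],
          by rw [map_add, ha2, hb2, add_zero]⟩
      zero_mem' := ⟨map_zero _, map_zero _⟩
      smul_mem' := by
        rintro c a ⟨ha1, ha2⟩
        exact ⟨by rw [map_smul, ha1, smul_zero],
          by rw [map_smul, ha2, smul_zero]⟩
      lie_mem := by
        rintro z v ⟨h1, h2⟩
        refine ⟨by rw [LieHom.map_lie, h1, lie_zero], ?_⟩
        rw [dl_pider R μ ν actLM actLN l z v, h1, h2, lie_zero, lie_zero, add_zero] }
  have hle : II ≤ J := by
    apply LieSubmodule.lieSpan_le.mpr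
    intro s hs
    exact ⟨piQ_eq_zero R μ ν actLM actLN (LieSubmodule.subset_lieSpan hs),
      dl_rels R μ ν actLM actLN hμ hν l s hs⟩
  exact (hle hx).2

variable (hμ : IsLieCrossedModule μ actLM) (hν : IsLieCrossedModule ν actLN)

/-- The action of `l : L` on the non-abelian tensor product, as a linear map. -/
noncomputable def actQ (l : L) : QT →ₗ[R] QT :=
  Submodule.liftQ (II).toSubmodule (dl R μ ν actLM actLN l)
    (fun _ hx => LinearMap.mem_ker.mpr (dl_vanish R μ ν actLM actLN hμ hν l hx))

lemma actQ_mk (l : L) (x : FreeLieAlgebra R (M × N)) :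
    actQ R μ ν actLM actLN hμ hν l (LieSubmodule.Quotient.mk (N := II) x) =
      dl R μ ν actLM actLN l x := rfl

lemma actQ_t (l : L) (m : M) (n : N) :
    actQ R μ ν actLM actLN hμ hν l (lieTensorOf m n) =
      lieTensorOf (actLM l m) n + lieTensorOf m (actLN l n) := by
  rw [show (lieTensorOf m n : QT) =
    LieSubmodule.Quotient.mk (N := II) (FreeLieAlgebra.of R (m, n)) from rfl,
    actQ_mk, dl_of]

lemma QT_surj (u : QT) : ∃ x, LieSubmodule.Quotient.mk (N := II) x = u :=
  Submodule.Quotient.mk_surjective (II).toSubmodule u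

lemma actQ_der (l : L) (u v : QT) :
    actQ R μ ν actLM actLN hμ hν l ⁅u, v⁆ =
      ⁅actQ R μ ν actLM actLN hμ hν l u, v⁆ + ⁅u, actQ R μ ν actLM actLN hμ hν l v⁆ := by
  obtain ⟨x, rfl⟩ := QT_surj R μ ν actLM actLN u
  obtain ⟨y, rfl⟩ := QT_surj R μ ν actLM actLN v
  rw [← LieSubmodule.Quotient.mk_bracket, actQ_mk, actQ_mk, actQ_mk,
    dl_pider R μ ν actLM actLN l x y, piQ_mk, piQ_mk]

/-- Any linear endomorphism of the tensor product which is a derivation with the right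
values on generators agrees with `actQ`. -/
lemma actQ_eq_of (l : L) (B : QT →ₗ[R] QT)
    (hder : ∀ u v : QT, B ⁅u, v⁆ = ⁅B u, v⁆ + ⁅u, B v⁆)
    (hof : ∀ (m : M) (n : N), B (lieTensorOf m n) =
      lieTensorOf (actLM l m) n + lieTensorOf m (actLN l n)) :
    ∀ u, B u = actQ R μ ν actLM actLN hμ hν l u := by
  have key : B ∘ₗ ((II).toSubmodule.mkQ) = dl R μ ν actLM actLN l := by
    refine IsPiDer.ext R (π := piQ R μ ν actLM actLN) ?_ (dl_pider R μ ν actLM actLN l) ?_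
    · intro x y
      show B (LieSubmodule.Quotient.mk (N := II) ⁅x, y⁆) = _
      rw [LieSubmodule.Quotient.mk_bracket, hder]
      rfl
    · rintro ⟨m, n⟩
      show B (lieTensorOf m n) = _
      rw [dl_of, hof]
  intro u
  obtain ⟨x, rfl⟩ := QT_surj R μ ν actLM actLN u
  rw [actQ_mk]
  exact LinearMap.congr_fun key x

lemma actQ_smul (r : R) (l : L) (u : QT) :
    actQ R μ ν actLM actLN hμ hν (r • l) u = r • actQ R μ ν actLM actLN hμ hν l u := by
  have hMsl := hμ.1.1.1
  have hMsr := hμ.1.1.2.1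
  have hMal := hμ.1.1.2.2.1
  have hMlie := hμ.1.2.1
  have hNsl := hν.1.1.1
  have hNsr := hν.1.1.2.1
  have hNal := hν.1.1.2.2.1
  have hNlie := hν.1.2.1
  refine (actQ_eq_of R μ ν actLM actLN hμ hν (r • l)
    (r • actQ R μ ν actLM actLN hμ hν l) ?_ ?_ u).symm
  · intro u v
    simp only [LinearMap.smul_apply, actQ_der R μ ν actLM actLN, smul_add,
      qt_smul_lie R μ ν actLM actLN, qt_lie_smul R μ ν actLM actLN]
  · intro m n
    simp only [LinearMap.smul_apply, actQ_t R μ ν actLM actLN, hMsl, hNsl,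
      t_smul_left R μ ν actLM actLN, t_smul_right R μ ν actLM actLN, smul_add]

lemma actQ_addl (l l' : L) (u : QT) :
    actQ R μ ν actLM actLN hμ hν (l + l') u =
      actQ R μ ν actLM actLN hμ hν l u + actQ R μ ν actLM actLN hμ hν l' u := by
  have hMsl := hμ.1.1.1
  have hMsr := hμ.1.1.2.1
  have hMal := hμ.1.1.2.2.1
  have hMlie := hμ.1.2.1
  have hNsl := hν.1.1.1
  have hNsr := hν.1.1.2.1
  have hNal := hν.1.1.2.2.1
  have hNlie := hν.1.2.1
  refine (actQ_eq_of R μ ν actLM actLN hμ hν (l + l')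
    (actQ R μ ν actLM actLN hμ hν l + actQ R μ ν actLM actLN hμ hν l') ?_ ?_ u).symm
  · intro u v
    simp only [LinearMap.add_apply, actQ_der R μ ν actLM actLN,
      qt_add_lie R μ ν actLM actLN, qt_lie_add R μ ν actLM actLN]
    abel
  · intro m n
    simp only [LinearMap.add_apply, actQ_t R μ ν actLM actLN, hMal, hNal,
      t_add_left R μ ν actLM actLN, t_add_right R μ ν actLM actLN]
    abel

lemma actQ_liel (l l' : L) (u : QT) :
    actQ R μ ν actLM actLN hμ hν ⁅l, l'⁆ u =
      actQ R μ ν actLM actLN hμ hν l (actQ R μ ν actLM actLN hμ hν l' u) -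
        actQ R μ ν actLM actLN hμ hν l' (actQ R μ ν actLM actLN hμ hν l u) := by
  have hMsl := hμ.1.1.1
  have hMsr := hμ.1.1.2.1
  have hMal := hμ.1.1.2.2.1
  have hMlie := hμ.1.2.1
  have hNsl := hν.1.1.1
  have hNsr := hν.1.1.2.1
  have hNal := hν.1.1.2.2.1
  have hNlie := hν.1.2.1
  refine (actQ_eq_of R μ ν actLM actLN hμ hν ⁅l, l'⁆
    (actQ R μ ν actLM actLN hμ hν l ∘ₗ actQ R μ ν actLM actLN hμ hν l' -
      actQ R μ ν actLM actLN hμ hν l' ∘ₗ actQ R μ ν actLM actLN hμ hν l) ?_ ?_ u).symm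
  · intro u v
    simp only [LinearMap.sub_apply, LinearMap.comp_apply, actQ_der R μ ν actLM actLN,
      map_add, qt_sub_lie R μ ν actLM actLN, qt_lie_sub R μ ν actLM actLN]
    abel
  · intro m n
    simp only [LinearMap.sub_apply, LinearMap.comp_apply, actQ_t R μ ν actLM actLN,
      map_add, hMlie, hNlie, t_sub_left R μ ν actLM actLN, t_sub_right R μ ν actLM actLN]
    abel

end Main
/-- Given crossed modules of Lie algebras `μ : M → L` and `ν : N → L`, there is a unique
action of `L` on the non-abelian tensor product `M ⊗ N` with
`l • (m ⊗ n) = (l • m) ⊗ n + m ⊗ (l • n)`. -/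
theorem lieTensor_action_exists_unique
    (R : Type u) {L M N : Type v} [CommRing R]
    [LieRing L] [LieAlgebra R L] [LieRing M] [LieAlgebra R M]
    [LieRing N] [LieAlgebra R N]
    (μ : M →ₗ⁅R⁆ L) (ν : N →ₗ⁅R⁆ L)
    (actLM : L → M → M) (actLN : L → N → N)
    (hμ : IsLieCrossedModule μ actLM) (hν : IsLieCrossedModule ν actLN) :
    ∃! act : L → NALieTensor R M N (fun m n => actLN (μ m) n) (fun n m => actLM (ν n) m) →
        NALieTensor R M N (fun m n => actLN (μ m) n) (fun n m => actLM (ν n) m),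
      IsLieAction R act ∧
      ∀ (l : L) (m : M) (n : N),
        act l (lieTensorOf m n) = lieTensorOf (actLM l m) n + lieTensorOf m (actLN l n) := by
  refine ⟨fun l u => actQ R μ ν actLM actLN hμ hν l u, ⟨⟨⟨?_, ?_, ?_, ?_⟩, ?_, ?_⟩, ?_⟩, ?_⟩
  · intro r l u
    exact actQ_smul R μ ν actLM actLN hμ hν r l u
  · intro r l u
    exact map_smul (actQ R μ ν actLM actLN hμ hν l) r u
  · intro l l' u
    exact actQ_addl R μ ν actLM actLN hμ hν l l' u
  · intro l u u'
    exact map_add (actQ R μ ν actLM actLN hμ hν l) u u'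
  · intro l l' u
    exact actQ_liel R μ ν actLM actLN hμ hν l l' u
  · intro l u v
    exact actQ_der R μ ν actLM actLN hμ hν l u v
  · intro l m n
    exact actQ_t R μ ν actLM actLN hμ hν l m n
  · rintro act' ⟨⟨⟨hsl, hsr, hal, har⟩, hlie, hder⟩, hgen⟩
    funext l u
    let B : NALieTensor R M N (fun m n => actLN (μ m) n) (fun n m => actLM (ν n) m) →ₗ[R]
        NALieTensor R M N (fun m n => actLN (μ m) n) (fun n m => actLM (ν n) m) :=
      { toFun := act' l
        map_add' := fun u v => har l u v
        map_smul' := fun r u => hsr r l u }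
    exact actQ_eq_of R μ ν actLM actLN hμ hν l B (fun u v => hder l u v)
      (fun m n => hgen l m n) u
end

section
/- Let R be a commutative ring, let M, N and Q be R-Lie algebras, let f : M → Q and g : N → Q be Lie algebra homomorphisms, and suppose M and N act on each other by R-bilinear maps (m, n) ↦ m•n and (n, m) ↦ n•m satisfying g(m•n) = ⁅f(m), g(n)⁆ and f(n•m) = ⁅g(n), f(m)⁆ for all m ∈ M, n ∈ N. Then the bilinear map h : M × N → Q defined by h(m, n) := ⁅f(m), g(n)⁆ is a Lie pairing, i.e. it satisfies h(⁅m, m'⁆, n) = h(m, m'•n) − h(m', m•n), h(m, ⁅n, n'⁆) = h(n'•m, n) − h(n•m, n'), and h(n•m, m'•n') = −⁅h(m, n), h(m', n')⁆ for all m, m' ∈ M and n, n' ∈ N. -/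
universe u v

/-!
The bracket of a Lie algebra `Q`, viewed as a pairing `Q × Q → Q` with `Q` acting on itself by
the adjoint action, is a Lie pairing: the two compatibility identities are forms of the Jacobi
identity and the last one is antisymmetry. Lie pairings pull back along Lie homomorphisms
`f : M → Q`, `g : N → Q` that intertwine the actions, and the hypotheses on `f` and `g` say
exactly that they intertwine the given actions with the adjoint ones.
-/

theorem IsBilinearPairing.comp_linearMap {R A B C A' B' : Type*} [CommRing R]
    [AddCommGroup A] [Module R A] [AddCommGroup B] [Module R B]
    [AddCommGroup C] [Module R C] [AddCommGroup A'] [Module R A'] [AddCommGroup B'] [Module R B']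
    {h : A → B → C} (hh : IsBilinearPairing R h) (f : A' →ₗ[R] A) (g : B' →ₗ[R] B) :
    IsBilinearPairing R (fun a b => h (f a) (g b)) := by
  obtain ⟨smul_left, smul_right, add_left, add_right⟩ := hh
  refine ⟨fun r a b => ?_, fun r a b => ?_, fun a a' b => ?_, fun a b b' => ?_⟩
  · simp only [map_smul, smul_left]
  · simp only [map_smul, smul_right]
  · simp only [map_add, add_left]
  · simp only [map_add, add_right]

theorem isBilinearPairing_lie (R : Type*) {L : Type*} [CommRing R] [LieRing L]
    [LieAlgebra R L] : IsBilinearPairing R (fun x y : L => ⁅x, y⁆) :=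
  ⟨smul_lie, lie_smul, add_lie, lie_add⟩

theorem isLiePairing_lie (R : Type*) {L : Type*} [CommRing R] [LieRing L] [LieAlgebra R L] :
    IsLiePairing R (fun x y : L => ⁅x, y⁆) (fun y x => ⁅y, x⁆) (fun x y => ⁅x, y⁆) := by
  refine ⟨isBilinearPairing_lie R, fun x x' y => lie_lie x x' y, fun x y y' => ?_,
    fun x x' y y' => ?_⟩
  · dsimp only
    rw [leibniz_lie, ← lie_skew y' x, ← lie_skew y x, neg_lie, neg_lie, ← lie_skew ⁅x, y'⁆ y]
    abel
  · dsimp only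
    rw [← lie_skew y x, neg_lie]

theorem IsLiePairing.comp_lieHom {R M N P M' N' : Type*} [CommRing R]
    [LieRing M] [LieAlgebra R M] [LieRing N] [LieAlgebra R N] [LieRing P] [LieAlgebra R P]
    [LieRing M'] [LieAlgebra R M'] [LieRing N'] [LieAlgebra R N']
    {actM : M → N → N} {actN : N → M → M} {h : M → N → P}
    (hh : IsLiePairing R actM actN h) (f : M' →ₗ⁅R⁆ M) (g : N' →ₗ⁅R⁆ N)
    {actM' : M' → N' → N'} {actN' : N' → M' → M'}
    (hg : ∀ m n, g (actM' m n) = actM (f m) (g n))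
    (hf : ∀ n m, f (actN' n m) = actN (g n) (f m)) :
    IsLiePairing R actM' actN' (fun m n => h (f m) (g n)) := by
  obtain ⟨bilinear, lie_left, lie_right, act_act⟩ := hh
  refine ⟨bilinear.comp_linearMap f.toLinearMap g.toLinearMap, fun m m' n => ?_,
    fun m n n' => ?_, fun m m' n n' => ?_⟩
  · simp only [LieHom.map_lie, lie_left, hg]
  · simp only [LieHom.map_lie, lie_right, hf]
  · simp only [hf, hg, act_act]

theorem bracket_is_lie_pairing_general
    (R : Type u) {M N Q : Type v} [CommRing R]
    [LieRing M] [LieAlgebra R M] [LieRing N] [LieAlgebra R N]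
    [LieRing Q] [LieAlgebra R Q]
    (f : M →ₗ⁅R⁆ Q) (g : N →ₗ⁅R⁆ Q)
    (actM : M → N → N) (actN : N → M → M)
    (hg : ∀ (m : M) (n : N), g (actM m n) = ⁅f m, g n⁆)
    (hf : ∀ (n : N) (m : M), f (actN n m) = ⁅g n, f m⁆) :
    IsLiePairing R actM actN (fun m n => ⁅f m, g n⁆) :=
  (isLiePairing_lie R).comp_lieHom f g hg hf

/-- If `f : M → Q` and `g : N → Q` are Lie algebra homomorphisms and `M`, `N` act on each
other by bilinear maps compatible with `f` and `g` (namely `g(m • n) = ⁅f m, g n⁆` and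
`f(n • m) = ⁅g n, f m⁆`), then `h(m, n) := ⁅f m, g n⁆` is a Lie pairing. -/
theorem bracket_is_lie_pairing
    (R : Type u) {M N Q : Type v} [CommRing R]
    [LieRing M] [LieAlgebra R M] [LieRing N] [LieAlgebra R N]
    [LieRing Q] [LieAlgebra R Q]
    (f : M →ₗ⁅R⁆ Q) (g : N →ₗ⁅R⁆ Q)
    (actM : M → N → N) (actN : N → M → M)
    (hbM : IsBilinearPairing R actM) (hbN : IsBilinearPairing R actN)
    (hg : ∀ (m : M) (n : N), g (actM m n) = ⁅f m, g n⁆)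
    (hf : ∀ (n : N) (m : M), f (actN n m) = ⁅g n, f m⁆) :
    IsLiePairing R actM actN (fun m n => ⁅f m, g n⁆) :=
  bracket_is_lie_pairing_general R f g actM actN hg hf
end
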